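/- Let X and Y be integrable real-valued random variables with E[X] = E[Y], and suppose there exist μ ∈ ℝ and h ≥ 0 and a coupling of X and Y under which |X − Y − μ| ≤ h almost surely (i.e., |X − Y − μ| ≤_0 h). Then for every η ∈ (0, 2) and every k ∈ ℤ_{>0}, |X^{⊕k} − Y^{⊕k}| ≤_η h·√(2·k·log(2/η)). -/

import Mathlib

open MeasureTheory ProbabilityTheory Real

noncomputable section

/-- The convolution of two Borel measures on `ℝ`:
the distribution of the sum of independent samples. -/
def mconv (μ ν : MeasureTheory.Measure ℝ) : MeasureTheory.Measure ℝ :=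
  (μ.prod ν).map fun p => p.1 + p.2

/-- `convPow μ k` is the `k`-fold convolution power of `μ`,
i.e. the distribution of the sum of `k` independent samples from `μ`. -/
def convPow (μ : MeasureTheory.Measure ℝ) : ℕ → MeasureTheory.Measure ℝ
  | 0 => MeasureTheory.Measure.dirac 0
  | n + 1 => mconv (convPow μ n) μ

/-- `δ_Y(ε) = E[max(0, 1 - e^{ε - Y})]` for a random variable `Y` with distribution `μ`. -/
def deltaCurve (μ : MeasureTheory.Measure ℝ) (ε : ℝ) : ℝ :=
  ∫ y, max 0 (1 - Real.exp (ε - y)) ∂μ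

/-- `ε_Y(δ) = inf {ε : δ_Y(ε) ≤ δ}`. -/
def epsCurve (μ : MeasureTheory.Measure ℝ) (δ : ℝ) : ℝ :=
  sInf {ε : ℝ | deltaCurve μ ε ≤ δ}

/-- A privacy loss random variable (PRV): a real random variable `Y` with `E[e^{-Y}] = 1`. -/
def IsPRV (μ : MeasureTheory.Measure ℝ) : Prop :=
  MeasureTheory.IsProbabilityMeasure μ ∧ (∫ y, Real.exp (-y) ∂μ) = 1

/-- `|X - Y| ≤_η h` : there is a coupling of the distributions `μ` of `X` and `ν` of `Y`
under which `Pr[|X - Y| > h] ≤ η`. -/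
def CouplingApprox (μ ν : MeasureTheory.Measure ℝ) (η h : ℝ) : Prop :=
  ∃ γ : MeasureTheory.Measure (ℝ × ℝ), MeasureTheory.IsProbabilityMeasure γ ∧
    γ.map Prod.fst = μ ∧ γ.map Prod.snd = ν ∧
    (γ {p : ℝ × ℝ | h < |p.1 - p.2|}).toReal ≤ η

/-- Total variation distance: `sup_B |μ(B) - ν(B)|` over Borel sets `B`. -/
def tvDist (μ ν : MeasureTheory.Measure ℝ) : ℝ :=
  ⨆ B : {B : Set ℝ // MeasurableSet B}, |(μ B.1).toReal - (ν B.1).toReal|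

/-- `L ∈ h · (1/2 + ℤ_{>0})`, i.e. `L = h(n + 1/2)` for a positive integer `n`. -/
def IsHalfGrid (h L : ℝ) : Prop := ∃ n : ℕ, 0 < n ∧ L = h * ((n : ℝ) + 1 / 2)

/-- The rounding map `R(t) = h · max(-n, ⌈t/h - 1/2⌉)` where `L = h(n + 1/2)`. -/
def discRound (h L t : ℝ) : ℝ :=
  h * ((max (-⌊L / h - 1 / 2⌋) ⌈t / h - 1 / 2⌉ : ℤ) : ℝ)

/-- The mean-correction shift `μ = E[Z - R(Z)]` used in the discretization. -/
def discMean (h L : ℝ) (μ : MeasureTheory.Measure ℝ) : ℝ :=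
  (∫ t, t ∂μ) - ∫ t, discRound h L t ∂μ

/-- The `(h, L)`-discretization `Z̃ = R(Z) + E[Z - R(Z)]` of a random variable `Z`
with distribution `μ`. -/
def discretize (h L : ℝ) (μ : MeasureTheory.Measure ℝ) : MeasureTheory.Measure ℝ :=
  μ.map fun t => discRound h L t + discMean h L μ

/-- The wrapping map `w_L : ℝ → (-L, L]` with `w_L(x) ≡ x (mod 2L)`. -/
def wrap (L x : ℝ) : ℝ := x - 2 * L * ((⌈x / (2 * L) - 1 / 2⌉ : ℤ) : ℝ)

/-- `Z^{⊕_L k}`: the `k`-fold convolution wrapped into `(-L, L]`. -/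
def wconvPow (μ : MeasureTheory.Measure ℝ) (L : ℝ) (k : ℕ) : MeasureTheory.Measure ℝ :=
  (convPow μ k).map (wrap L)

/-- `Y` conditioned on `|Y| ≤ L`. -/
def condAbs (μ : MeasureTheory.Measure ℝ) (L : ℝ) : MeasureTheory.Measure ℝ :=
  ProbabilityTheory.cond μ {x : ℝ | |x| ≤ L}

end

/-!
Under the coupling `γ` the difference `D = X - Y` lies in `[μ - h, μ + h]` and has mean zero, so
by Hoeffding's lemma it is sub-Gaussian with variance proxy `h²`. Running `k` independent copies
of `γ` couples `X^{⊕k}` with `Y^{⊕k}`, and the difference of the two sums is a sum of `k`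
independent copies of `D`, hence sub-Gaussian with proxy `k h²`. The two-sided Chernoff bound at
`t = h √(2 k log (2/η))` gives exactly `2 exp (-t² / (2 k h²)) = η`.
-/

open scoped NNReal

namespace MeasureTheory.Measure

variable {M : Type*} [AddMonoid M] [MeasurableSpace M]

noncomputable def iterConv (μ : Measure M) : ℕ → Measure M
  | 0 => dirac 0
  | n + 1 => iterConv μ n ∗ μ

variable [MeasurableAdd₂ M]

instance isProbabilityMeasure_iterConv (μ : Measure M) [IsProbabilityMeasure μ] (k : ℕ) :
    IsProbabilityMeasure (iterConv μ k) := by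
  induction k with
  | zero => rw [iterConv]; infer_instance
  | succ n ih => rw [iterConv, conv]; exact isProbabilityMeasure_map (by fun_prop)

instance sFinite_iterConv (μ : Measure M) [SFinite μ] (k : ℕ) : SFinite (iterConv μ k) := by
  induction k with
  | zero => rw [iterConv]; infer_instance
  | succ n ih => rw [iterConv]; infer_instance

lemma map_iterConv_addMonoidHom {M' : Type*} [AddMonoid M'] [MeasurableSpace M']
    [MeasurableAdd₂ M'] (μ : Measure M) [SFinite μ]
    (L : M →+ M') (hL : Measurable L) (k : ℕ) :
    (iterConv μ k).map L = iterConv (μ.map L) k := by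
  induction k with
  | zero => rw [iterConv, iterConv, map_dirac' hL, map_zero]
  | succ n ih => rw [iterConv, iterConv, map_conv_addMonoidHom L hL, ih]

end MeasureTheory.Measure

lemma convPow_eq_iterConv (μ : Measure ℝ) (k : ℕ) : convPow μ k = μ.iterConv k := by
  induction k with
  | zero => rfl
  | succ n ih => rw [convPow, Measure.iterConv, ← ih]; rfl

namespace ProbabilityTheory.HasSubgaussianMGF

open Measure

lemma conv {μ ν : Measure ℝ} [IsProbabilityMeasure μ] [IsProbabilityMeasure ν] {c c' : ℝ≥0}
    (hμ : HasSubgaussianMGF id c μ) (hν : HasSubgaussianMGF id c' ν) :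
    HasSubgaussianMGF id (c + c') (μ ∗ ν) := by
  have hfst : HasSubgaussianMGF (fun p : ℝ × ℝ => p.1) c (μ.prod ν) := by
    rw [← id_map_iff measurable_fst.aemeasurable, map_fst_prod, measure_univ, one_smul]
    exact hμ
  have hsnd : HasSubgaussianMGF (fun p : ℝ × ℝ => p.2) c' (μ.prod ν) := by
    rw [← id_map_iff measurable_snd.aemeasurable, map_snd_prod, measure_univ, one_smul]
    exact hν
  rw [Measure.conv, id_map_iff (by fun_prop)]
  exact hfst.add_of_indepFun hsnd (indepFun_prod measurable_id measurable_id)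

lemma iterConv {μ : Measure ℝ} [IsProbabilityMeasure μ] {c : ℝ≥0}
    (hμ : HasSubgaussianMGF id c μ) (k : ℕ) : HasSubgaussianMGF id (k * c) (iterConv μ k) := by
  induction k with
  | zero =>
    simp only [Nat.cast_zero, zero_mul, Measure.iterConv]
    exact fun_zero.congr (ae_eq_dirac id).symm
  | succ n ih =>
    rw [Measure.iterConv, Nat.cast_succ, add_one_mul]
    exact ih.conv hμ

end ProbabilityTheory.HasSubgaussianMGF

namespace ProbabilityTheory

variable {Ω : Type*} [MeasurableSpace Ω] {μ : Measure Ω} {X : Ω → ℝ}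

lemma hasSubgaussianMGF_of_abs_sub_le_of_integral_eq_zero [IsProbabilityMeasure μ] {m h : ℝ}
    (hm : AEMeasurable X μ) (hb : ∀ᵐ ω ∂μ, |X ω - m| ≤ h) (hc : μ[X] = 0) :
    HasSubgaussianMGF X (‖h‖₊ ^ 2) μ := by
  have hIcc : ∀ᵐ ω ∂μ, X ω ∈ Set.Icc (m - h) (m + h) := by
    filter_upwards [hb] with ω hω
    rw [abs_sub_le_iff] at hω
    constructor <;> linarith
  convert hasSubgaussianMGF_of_mem_Icc_of_integral_eq_zero hm hIcc hc using 2
  rw [show m + h - (m - h) = 2 * h by ring, nnnorm_mul, Real.nnnorm_ofNat,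
    mul_div_cancel_left₀ _ two_ne_zero]

namespace HasSubgaussianMGF

variable {c : ℝ≥0}

lemma measureReal_abs_ge_le [IsFiniteMeasure μ] (h : HasSubgaussianMGF X c μ) {ε : ℝ}
    (hε : 0 ≤ ε) : μ.real {ω | ε ≤ |X ω|} ≤ 2 * exp (-ε ^ 2 / (2 * c)) := by
  have hsplit : {ω | ε ≤ |X ω|} = {ω | ε ≤ X ω} ∪ {ω | ε ≤ (-X) ω} := by
    ext ω
    simp [le_abs]
  calc μ.real {ω | ε ≤ |X ω|}
      ≤ μ.real {ω | ε ≤ X ω} + μ.real {ω | ε ≤ (-X) ω} := hsplit ▸ measureReal_union_le _ _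
    _ ≤ exp (-ε ^ 2 / (2 * c)) + exp (-ε ^ 2 / (2 * c)) :=
        add_le_add (h.measure_ge_le hε) (h.neg.measure_ge_le hε)
    _ = 2 * exp (-ε ^ 2 / (2 * c)) := by ring

lemma measureReal_abs_gt_sqrt_log_le [IsFiniteMeasure μ] (h : HasSubgaussianMGF X c μ) {η : ℝ}
    (hη : 0 < η) : μ.real {ω | √(2 * c * log (2 / η)) < |X ω|} ≤ η := by
  set t := √(2 * c * log (2 / η))
  rcases eq_or_ne c 0 with rfl | hc
  · have hnull : ∀ᵐ ω ∂μ, ¬ t < |X ω| := by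
      filter_upwards [h.ae_eq_zero_of_hasSubgaussianMGF_zero] with ω hω
      simp [hω, t]
    rw [ae_iff] at hnull
    simp only [not_not] at hnull
    rw [measureReal_def, hnull, ENNReal.toReal_zero]
    exact hη.le
  have hc : (0 : ℝ) < c := by positivity
  calc μ.real {ω | t < |X ω|}
      ≤ μ.real {ω | t ≤ |X ω|} :=
        measureReal_mono (Set.ofPred_subset_ofPred.mpr fun _ => le_of_lt)
    _ ≤ 2 * exp (-t ^ 2 / (2 * c)) := h.measureReal_abs_ge_le (sqrt_nonneg _)
    _ ≤ η := by
      rcases le_or_gt 2 η with h2 | h2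
      · have hlog : log (2 / η) ≤ 0 := log_nonpos (by positivity) (div_le_one_of_le₀ h2 hη.le)
        have ht : t = 0 := sqrt_eq_zero'.mpr (mul_nonpos_of_nonneg_of_nonpos (by positivity) hlog)
        simpa [ht] using h2
      · have hlog : 0 < log (2 / η) := log_pos ((one_lt_div hη).mpr h2)
        have ht : -t ^ 2 / (2 * c) = -log (2 / η) := by
          rw [sq_sqrt (by positivity)]
          field_simp
        rw [ht, exp_neg, exp_log (by positivity), inv_div]
        linarith

end HasSubgaussianMGF

end ProbabilityTheory

lemma integral_map_sub_eq_sub {γ : Measure (ℝ × ℝ)}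
    (h₁ : Integrable (fun x : ℝ => x) (γ.map Prod.fst))
    (h₂ : Integrable (fun x : ℝ => x) (γ.map Prod.snd)) :
    ∫ x, x ∂(γ.map fun p => p.1 - p.2) = (∫ x, x ∂(γ.map Prod.fst)) - ∫ x, x ∂(γ.map Prod.snd) := by
  rw [integrable_map_measure (by fun_prop) measurable_fst.aemeasurable] at h₁
  rw [integrable_map_measure (by fun_prop) measurable_snd.aemeasurable] at h₂
  rw [integral_map (f := fun x : ℝ => x) (by fun_prop) (by fun_prop),
    integral_map (f := fun x : ℝ => x) (by fun_prop) (by fun_prop),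
    integral_map (f := fun x : ℝ => x) (by fun_prop) (by fun_prop)]
  exact integral_sub h₁ h₂

lemma ae_abs_sub_le_of_measure_lt_abs_eq_zero {γ : Measure (ℝ × ℝ)} {μ h : ℝ}
    (hγ : γ {p : ℝ × ℝ | h < |p.1 - p.2 - μ|} = 0) :
    ∀ᵐ x ∂(γ.map fun p => p.1 - p.2), |x - μ| ≤ h := by
  rw [ae_map_iff (by fun_prop) (measurableSet_le (by fun_prop) measurable_const), ae_iff]
  simpa only [not_le] using hγ

theorem coupling_concentration_general
    (X Y : MeasureTheory.Measure ℝ)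
    [MeasureTheory.IsProbabilityMeasure X] [MeasureTheory.IsProbabilityMeasure Y]
    (hX : MeasureTheory.Integrable (fun x : ℝ => x) X)
    (hY : MeasureTheory.Integrable (fun x : ℝ => x) Y)
    (hmean : (∫ x, x ∂X) = ∫ x, x ∂Y)
    (μ h : ℝ) (hh : 0 ≤ h)
    (hc : ∃ γ : MeasureTheory.Measure (ℝ × ℝ), MeasureTheory.IsProbabilityMeasure γ ∧
      γ.map Prod.fst = X ∧ γ.map Prod.snd = Y ∧
      (γ {p : ℝ × ℝ | h < |p.1 - p.2 - μ|}).toReal ≤ 0)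
    (η : ℝ) (hη : η ∈ Set.Ioo (0 : ℝ) 2) (k : ℕ) :
    CouplingApprox (convPow X k) (convPow Y k) η
      (h * Real.sqrt (2 * k * Real.log (2 / η))) := by
  obtain ⟨γ, hγ, rfl, rfl, hbad⟩ := hc
  set D : ℝ × ℝ →+ ℝ := AddMonoidHom.fst ℝ ℝ - AddMonoidHom.snd ℝ ℝ
  have hD : Measurable D := measurable_fst.sub measurable_snd
  have : IsProbabilityMeasure (γ.map D) := Measure.isProbabilityMeasure_map hD.aemeasurable
  have hsupp : ∀ᵐ x ∂(γ.map D), |x - μ| ≤ h :=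
    ae_abs_sub_le_of_measure_lt_abs_eq_zero ((measureReal_eq_zero_iff).mp (le_antisymm hbad
      measureReal_nonneg))
  have hcentred : ∫ x, x ∂(γ.map D) = 0 :=
    (integral_map_sub_eq_sub hX hY).trans (sub_eq_zero.mpr hmean)
  have hsubG : HasSubgaussianMGF id (k * ‖h‖₊ ^ 2) ((γ.map D).iterConv k) :=
    (hasSubgaussianMGF_of_abs_sub_le_of_integral_eq_zero aemeasurable_id hsupp hcentred).iterConv k
  have ht : h * √(2 * k * Real.log (2 / η)) = √(2 * ↑(k * ‖h‖₊ ^ 2) * Real.log (2 / η)) := by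
    push_cast
    rw [Real.norm_eq_abs, sq_abs, show 2 * (k * h ^ 2) * Real.log (2 / η) =
      h ^ 2 * (2 * k * Real.log (2 / η)) by ring, Real.sqrt_mul (sq_nonneg h), Real.sqrt_sq hh]
  refine ⟨γ.iterConv k, inferInstance, ?_, ?_, ?_⟩
  · rw [convPow_eq_iterConv]
    exact Measure.map_iterConv_addMonoidHom γ (AddMonoidHom.fst ℝ ℝ) measurable_fst k
  · rw [convPow_eq_iterConv]
    exact Measure.map_iterConv_addMonoidHom γ (AddMonoidHom.snd ℝ ℝ) measurable_snd k
  · have htail := hsubG.measureReal_abs_gt_sqrt_log_le hη.1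
    rw [← Measure.map_iterConv_addMonoidHom γ D hD,
      map_measureReal_apply hD (measurableSet_lt measurable_const (by fun_prop))] at htail
    rwa [ht]

/-- Hoeffding-style concentration for coupling approximations of convolution powers. -/
theorem coupling_concentration
    (X Y : MeasureTheory.Measure ℝ)
    [MeasureTheory.IsProbabilityMeasure X] [MeasureTheory.IsProbabilityMeasure Y]
    (hX : MeasureTheory.Integrable (fun x : ℝ => x) X)
    (hY : MeasureTheory.Integrable (fun x : ℝ => x) Y)
    (hmean : (∫ x, x ∂X) = ∫ x, x ∂Y)
    (μ h : ℝ) (hh : 0 ≤ h)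
    (hc : ∃ γ : MeasureTheory.Measure (ℝ × ℝ), MeasureTheory.IsProbabilityMeasure γ ∧
      γ.map Prod.fst = X ∧ γ.map Prod.snd = Y ∧
      (γ {p : ℝ × ℝ | h < |p.1 - p.2 - μ|}).toReal ≤ 0)
    (η : ℝ) (hη : η ∈ Set.Ioo (0 : ℝ) 2) (k : ℕ) (hk : 0 < k) :
    CouplingApprox (convPow X k) (convPow Y k) η
      (h * Real.sqrt (2 * k * Real.log (2 / η))) :=
  coupling_concentration_general X Y hX hY hmean μ h hh hc η hη k
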